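/- arXiv:2312.04501 — 2 statements merged into one kernel-verified Lean document; each statement's English description precedes it below -/
import Mathlib

section
/- Let G = (V, E) be a directed acyclic graph with edge weights θ : E → ℝ, a distinguished set of input nodes, bias nodes, hidden nodes, and output nodes, and define activations h_i recursively: h_i = x_i for input node i, h_i = 1 for bias nodes, h_i = σ(Σ_{(i,j)∈E} θ_{(i,j)} h_j) for hidden nodes, and h_i = Σ_{(i,j)∈E} θ_{(i,j)} h_j for output nodes. If φ : V → V is a graph automorphism (edge-preserving bijection) that fixes every input, bias, and output node, and Φ(θ) is defined by Φ(θ)_{(φ(i),φ(j))} = θ_{(i,j)}, then for every input x and every node v, the activation of φ(v) under parameters Φ(θ) equals the activation of v under parameters θ. -/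
open Finset

variable {V : Type*}

/-- `IsActivation σ E inp bias hid out θ x h` says that `h` assigns to every node of the
computation DAG its activation on input `x`, under parameters `θ` (where `θ i j` is the
weight of the edge `(i,j)`, an edge from `j` to `i`): inputs read off `x`, bias nodes are
constant `1`, hidden nodes apply `σ` to the weighted sum of predecessor activations, and
output nodes take the weighted sum without a nonlinearity. -/
def IsActivation [Fintype V] (σ : ℝ → ℝ) (E : V → V → Prop) [DecidableRel E]
    (inp bias hid out : V → Prop) (θ : V → V → ℝ) (x : V → ℝ) (h : V → ℝ) : Prop :=
  ∀ i : V,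
    (inp i → h i = x i) ∧
    (bias i → h i = 1) ∧
    (hid i → h i = σ (∑ j : V, if E i j then θ i j * h j else 0)) ∧
    (out i → h i = ∑ j : V, if E i j then θ i j * h j else 0)

/-- For a graph automorphism `φ` of an acyclic computation graph that fixes every input,
bias, and output node, the activations of the permuted-parameter network are the permuted
activations: `h^{Φ(θ)}_{φ(v)}(x) = h^θ_v(x)` for every node `v`. -/
theorem stmt2 [Fintype V] (σ : ℝ → ℝ) (E : V → V → Prop) [DecidableRel E]
    (inp bias hid out : V → Prop)
    -- each node is of exactly one of the four kinds
    (hkind : ∀ v : V, (inp v ∧ ¬bias v ∧ ¬hid v ∧ ¬out v) ∨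
      (¬inp v ∧ bias v ∧ ¬hid v ∧ ¬out v) ∨
      (¬inp v ∧ ¬bias v ∧ hid v ∧ ¬out v) ∨
      (¬inp v ∧ ¬bias v ∧ ¬hid v ∧ out v))
    -- the graph is acyclic: the predecessor relation is well-founded
    (hacyc : WellFounded (fun j i => E i j))
    (θ : V → V → ℝ) (x : V → ℝ)
    (φ : Equiv.Perm V)
    -- φ is edge-preserving
    (hedge : ∀ i j, E (φ i) (φ j) ↔ E i j)
    -- φ fixes input, bias, and output nodes
    (hfix : ∀ v, inp v ∨ bias v ∨ out v → φ v = v)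
    -- Φ(θ) is the induced permuted parameter vector: Φ(θ)_{(φ i, φ j)} = θ_{(i,j)}
    (θ' : V → V → ℝ) (hθ' : ∀ i j, θ' (φ i) (φ j) = θ i j)
    (h h' : V → ℝ)
    (hh : IsActivation σ E inp bias hid out θ x h)
    (hh' : IsActivation σ E inp bias hid out θ' x h') :
    ∀ v : V, h' (φ v) = h v := by
  intro v
  induction v using hacyc.induction with
  | _ v ih =>
  rcases hkind v with ⟨hi, _, _, _⟩ | ⟨_, hb, _, _⟩ | ⟨hni, hnb, hd, hno⟩ | ⟨_, _, _, ho⟩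
  · rw [hfix v (Or.inl hi), (hh' v).1 hi, (hh v).1 hi]
  · rw [hfix v (Or.inr (Or.inl hb)), (hh' v).2.1 hb, (hh v).2.1 hb]
  · -- hidden node: φ v is also hidden
    have hdphi : hid (φ v) := by
      rcases hkind (φ v) with ⟨hi, _, _, _⟩ | ⟨_, hb, _, _⟩ | ⟨_, _, hd', _⟩ | ⟨_, _, _, ho⟩
      · have := hfix (φ v) (Or.inl hi)
        have : φ v = v := φ.injective this
        exact absurd (this ▸ hi) hni
      · have := hfix (φ v) (Or.inr (Or.inl hb))
        have : φ v = v := φ.injective this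
        exact absurd (this ▸ hb) hnb
      · exact hd'
      · have := hfix (φ v) (Or.inr (Or.inr ho))
        have : φ v = v := φ.injective this
        exact absurd (this ▸ ho) hno
    rw [(hh' (φ v)).2.2.1 hdphi, (hh v).2.2.1 hd]
    congr 1
    rw [← Equiv.sum_comp φ (fun j => if E (φ v) j then θ' (φ v) j * h' j else 0)]
    apply Finset.sum_congr rfl
    intro j _
    by_cases hE : E v j
    · rw [if_pos ((hedge v j).mpr hE), if_pos hE, hθ', ih j hE]
    · rw [if_neg (fun c => hE ((hedge v j).mp c)), if_neg hE]
  · rw [hfix v (Or.inr (Or.inr ho)), (hh' v).2.2.2 ho, (hh v).2.2.2 ho]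
    rw [← Equiv.sum_comp φ (fun j => if E v j then θ' v j * h' j else 0)]
    apply Finset.sum_congr rfl
    intro j _
    have hv : v = φ v := (hfix v (Or.inr (Or.inr ho))).symm
    by_cases hE : E v j
    · rw [if_pos (by rw [hv]; exact (hedge v j).mpr hE), if_pos hE]
      have hθ'' := hθ' v j
      rw [← hv] at hθ''
      rw [hθ'', ih j hE]
    · rw [if_neg (fun c => hE ((hedge v j).mp (hv ▸ c))), if_neg hE]
end

section
/- Under the same setup of a feedforward computation DAG with activations defined recursively, for any neural DAG automorphism φ (an adjacency-preserving bijection of nodes fixing all input, bias, and output nodes) with induced parameter permutation Φ, the network functions are equal: f_θ(x) = f_{Φ(θ)}(x) for all inputs x, where f_θ(x) is the vector of activations at the output nodes. -/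
open Finset

variable {V : Type*}

/-- For any neural DAG automorphism `φ` (an adjacency-preserving bijection of the nodes
fixing all input, bias, and output nodes) with induced parameter permutation `Φ`, the
network functions agree: the vector of output-node activations under `θ` equals the one
under `Φ(θ)`, i.e. `f_θ(x) = f_{Φ(θ)}(x)` for all inputs `x`. -/
theorem stmt3 [Fintype V] (σ : ℝ → ℝ) (E : V → V → Prop) [DecidableRel E]
    (inp bias hid out : V → Prop)
    (hkind : ∀ v : V, (inp v ∧ ¬bias v ∧ ¬hid v ∧ ¬out v) ∨
      (¬inp v ∧ bias v ∧ ¬hid v ∧ ¬out v) ∨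
      (¬inp v ∧ ¬bias v ∧ hid v ∧ ¬out v) ∨
      (¬inp v ∧ ¬bias v ∧ ¬hid v ∧ out v))
    (hacyc : WellFounded (fun j i => E i j))
    (θ : V → V → ℝ) (x : V → ℝ)
    (φ : Equiv.Perm V)
    (hedge : ∀ i j, E (φ i) (φ j) ↔ E i j)
    (hfix : ∀ v, inp v ∨ bias v ∨ out v → φ v = v)
    (θ' : V → V → ℝ) (hθ' : ∀ i j, θ' (φ i) (φ j) = θ i j)
    (h h' : V → ℝ)
    (hh : IsActivation σ E inp bias hid out θ x h)
    (hh' : IsActivation σ E inp bias hid out θ' x h') :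
    ∀ v : V, out v → h' v = h v := by
  have key : ∀ v : V, h' (φ v) = h v := by
    intro v
    induction v using hacyc.induction with
    | _ v ih =>
      have hsum : (∑ j : V, if E (φ v) j then θ' (φ v) j * h' j else 0)
          = ∑ j : V, if E v j then θ v j * h j else 0 := by
        rw [← Equiv.sum_comp φ]
        refine Finset.sum_congr rfl fun j _ => ?_
        simp only [hedge, hθ']
        by_cases hE : E v j
        · simp [hE, ih j hE]
        · simp [hE]
      rcases hkind v with ⟨h1,_,_,_⟩ | ⟨_,h1,_,_⟩ | ⟨_,_,h1,_⟩ | ⟨_,_,_,h1⟩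
      · rw [hfix v (Or.inl h1), (hh' v).1 h1, (hh v).1 h1]
      · rw [hfix v (Or.inr (Or.inl h1)), (hh' v).2.1 h1, (hh v).2.1 h1]
      · have hhid : hid (φ v) := by
          rcases hkind (φ v) with ⟨h2,_,_,_⟩ | ⟨_,h2,_,_⟩ | ⟨_,_,h2,_⟩ | ⟨_,_,_,h2⟩
          · have := φ.injective (hfix (φ v) (Or.inl h2)); rw [this] at h2; tauto
          · have := φ.injective (hfix (φ v) (Or.inr (Or.inl h2))); rw [this] at h2; tauto
          · exact h2
          · have := φ.injective (hfix (φ v) (Or.inr (Or.inr h2))); rw [this] at h2; tauto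
        rw [(hh' (φ v)).2.2.1 hhid, (hh v).2.2.1 h1, hsum]
      · rw [hfix v (Or.inr (Or.inr h1))] at hsum ⊢
        rw [(hh' v).2.2.2 h1, (hh v).2.2.2 h1, hsum]
  intro v hv
  have := key v
  rwa [hfix v (Or.inr (Or.inr hv))] at this
end
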